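/- Let Q(x) be a monic polynomial of degree d+1 over a field of characteristic zero having d+1 distinct roots, and let F(x) be a polynomial of degree at most d. Then the sum over the roots α of Q of F(α) / Q'(α) equals the coefficient of x^d in F(x). In particular this value is independent of the choice of Q. -/

import Mathlib

/-!
A monic `Q` with `deg Q` distinct roots is the nodal polynomial `∏ (X - α)` of its roots, so
`Q'(α) = ∏_{β ≠ α} (α - β)`. Lagrange interpolation of `F` at the roots then expresses the
coefficient of `X^d` as `∑ F(α) / ∏_{β ≠ α} (α - β)`, the sum of the leading coefficients of
the interpolation terms.
-/

open Polynomial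

theorem Polynomial.Monic.eq_nodal_roots_toFinset {R : Type*} [CommRing R] [IsDomain R]
    [DecidableEq R] {Q : R[X]} (hQ : Q.Monic) (hroots : Q.roots.toFinset.card = Q.natDegree) :
    Q = Lagrange.nodal Q.roots.toFinset id := by
  have hcard : Multiset.card Q.roots = Q.natDegree :=
    le_antisymm (card_roots' Q) (hroots ▸ Multiset.toFinset_card_le _)
  have hnodup : Q.roots.Nodup :=
    Multiset.toFinset_card_eq_card_iff_nodup.mp (hroots.trans hcard.symm)
  conv_lhs => rw [← prod_multiset_X_sub_C_of_monic_of_roots_card_eq hQ hcard]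
  rw [Lagrange.nodal, Finset.prod_eq_multiset_prod, Multiset.toFinset_val, hnodup.dedup]
  rfl

theorem Lagrange.coeff_eq_sum_div_eval_derivative_nodal {F ι : Type*} [Field F] [DecidableEq ι]
    {s : Finset ι} {v : ι → F} (hvs : Set.InjOn v s) {P : F[X]} (hP : P.degree < s.card) :
    P.coeff (s.card - 1) = ∑ i ∈ s, P.eval (v i) / (derivative (nodal s v)).eval (v i) := by
  rw [coeff_eq_sum hvs hP]
  refine Finset.sum_congr rfl fun i hi => ?_
  rw [eval_nodal_derivative_eval_node_eq hi, eval_nodal]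

theorem sum_eval_div_derivative_eval_eq_coeff_general {K : Type*} [Field K] [DecidableEq K]
    (d : ℕ) (Q F : K[X]) (hQ : Q.Monic) (hdeg : Q.natDegree = d + 1)
    (hroots : Q.roots.toFinset.card = d + 1) (hF : F.degree ≤ d) :
    ∑ α ∈ Q.roots.toFinset, F.eval α / (Polynomial.derivative Q).eval α = F.coeff d := by
  have hF' : F.degree < Q.roots.toFinset.card := by
    rw [hroots]
    exact hF.trans_lt (by exact_mod_cast d.lt_succ_self)
  have hcoeff := Lagrange.coeff_eq_sum_div_eval_derivative_nodal Function.injective_id.injOn hF'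
  rw [hroots, Nat.add_sub_cancel, ← hQ.eq_nodal_roots_toFinset (hroots.trans hdeg.symm)] at hcoeff
  exact hcoeff.symm

/-- Let `Q(x)` be a monic polynomial of degree `d+1` over a field of characteristic zero
having `d+1` distinct roots, and let `F(x)` be a polynomial of degree at most `d`.  Then the
sum over the roots `α` of `Q` of `F(α) / Q'(α)` equals the coefficient of `x^d` in `F(x)`;
in particular it is independent of the choice of `Q`. -/
theorem sum_eval_div_derivative_eval_eq_coeff {K : Type*} [Field K] [CharZero K] [DecidableEq K]
    (d : ℕ) (Q F : K[X]) (hQ : Q.Monic) (hdeg : Q.natDegree = d + 1)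
    (hroots : Q.roots.toFinset.card = d + 1) (hF : F.degree ≤ d) :
    ∑ α ∈ Q.roots.toFinset, F.eval α / (Polynomial.derivative Q).eval α = F.coeff d :=
  sum_eval_div_derivative_eval_eq_coeff_general d Q F hQ hdeg hroots hF
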